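/- For a graphical source, if P* is the fundamental partition (finest minimizer of I_P) and A ∈ P* is a cell with |A| ≥ 2, then there exists at least one edge e ∈ E with e ⊆ A. -/

import Mathlib

/-!
If no edge of positive weight lies inside the cell `A`, split `A` into `{a}` and `A \ {a}`.
No edge of positive weight is newly cut, so the crossing weight is unchanged while the number of
cells grows by one: `I` does not increase. By minimality of `P*` it stays equal, so the finer
partition is also a minimizer, and `P*` would have to refine it, which it does not.
-/

open Finset
open scoped Classical

/-- `I_P(x) = (1/(|P|-1)) ∑_{e ∈ E_P} x e`, `E_P` = edges crossing the partition `P`. -/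
noncomputable def IP {M : Type*} [Fintype M] [DecidableEq M] (x : Finset M → ℝ)
    (P : Finpartition (univ : Finset M)) : ℝ :=
  ((P.parts.card : ℝ) - 1)⁻¹ *
    ∑ e ∈ univ.filter (fun e : Finset M => ¬ ∃ A ∈ P.parts, e ⊆ A), x e

namespace Finpartition

variable {α : Type*} [DistribLattice α] [OrderBot α] [DecidableEq α] {a A B b c : α}
  (P : Finpartition a)

lemma disjoint_sup_parts_erase (hA : A ∈ P.parts) : Disjoint ((P.parts.erase A).sup id) A :=
  Finset.disjoint_sup_left.2 fun _ hB =>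
    P.disjoint (mem_of_mem_erase hB) hA (ne_of_mem_erase hB)

variable (hA : A ∈ P.parts) (hb : b ≠ ⊥) (hc : c ≠ ⊥) (hbc : Disjoint b c) (hbcA : b ⊔ c = A)

def splitPart : Finpartition a :=
  ((P.ofSubset (P.parts.erase_subset A) rfl).extend hb
    ((P.disjoint_sup_parts_erase hA).mono_right (hbcA ▸ le_sup_left)) rfl).extend hc
    (by
      rw [disjoint_sup_left]
      exact ⟨(P.disjoint_sup_parts_erase hA).mono_right (hbcA ▸ le_sup_right), hbc⟩)
    (by
      have h := P.sup_parts
      rw [← insert_erase hA, sup_insert, sup_comm] at h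
      rw [sup_assoc, hbcA]
      exact h)

lemma splitPart_parts :
    (P.splitPart hA hb hc hbc hbcA).parts = insert c (insert b (P.parts.erase A)) :=
  rfl

lemma card_splitPart : #(P.splitPart hA hb hc hbc hbcA).parts = #P.parts + 1 := by
  rw [splitPart, card_extend, card_extend, ofSubset_parts, card_erase_add_one hA]

lemma mem_splitPart_parts_of_ne (hB : B ∈ P.parts) (hBA : B ≠ A) :
    B ∈ (P.splitPart hA hb hc hbc hbcA).parts := by
  rw [splitPart_parts]
  exact mem_insert_of_mem (mem_insert_of_mem (mem_erase.2 ⟨hBA, hB⟩))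

lemma splitPart_le : P.splitPart hA hb hc hbc hbcA ≤ P := by
  intro B hB
  rw [splitPart_parts, mem_insert, mem_insert] at hB
  rcases hB with rfl | rfl | hB
  · exact ⟨A, hA, hbcA ▸ le_sup_right⟩
  · exact ⟨A, hA, hbcA ▸ le_sup_left⟩
  · exact ⟨B, mem_of_mem_erase hB, le_rfl⟩

lemma not_le_splitPart : ¬ P ≤ P.splitPart hA hb hc hbc hbcA := by
  intro hle
  obtain ⟨C, hC, hAC⟩ := hle hA
  rw [splitPart_parts, mem_insert, mem_insert] at hC
  rcases hC with rfl | rfl | hC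
  · exact hb (hbc.eq_bot_of_le (hbcA ▸ le_sup_left |>.trans hAC))
  · exact hc (hbc.symm.eq_bot_of_le (hbcA ▸ le_sup_right |>.trans hAC))
  · exact P.ne_bot hA ((P.disjoint hA (mem_of_mem_erase hC)
      (ne_of_mem_erase hC).symm).eq_bot_of_le hAC)

end Finpartition

section CrossingEdges

variable {M : Type*} [Fintype M] [DecidableEq M]

def crossingEdges (P : Finpartition (univ : Finset M)) : Finset (Finset M) :=
  univ.filter fun e => ¬ ∃ A ∈ P.parts, e ⊆ A

lemma IP_eq (w : Finset M → ℝ) (P : Finpartition (univ : Finset M)) :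
    IP w P = ((#P.parts : ℝ) - 1)⁻¹ * ∑ e ∈ crossingEdges P, w e :=
  rfl

lemma crossingEdges_subset_of_le {P Q : Finpartition (univ : Finset M)} (hQP : Q ≤ P) :
    crossingEdges P ⊆ crossingEdges Q := by
  intro e he
  simp only [crossingEdges, mem_filter, mem_univ, true_and] at he ⊢
  rintro ⟨C, hC, heC⟩
  obtain ⟨B, hB, hCB⟩ := hQP hC
  exact he ⟨B, hB, heC.trans hCB⟩

lemma IP_le_of_le (w : Finset M → ℝ) (hw : ∀ e, 0 ≤ w e) {P Q : Finpartition (univ : Finset M)}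
    (hQP : Q ≤ P) (hP : 2 ≤ #P.parts) (hPQ : #P.parts ≤ #Q.parts)
    (hcut : ∀ e, w e ≠ 0 → ∀ B ∈ P.parts, e ⊆ B → ∃ C ∈ Q.parts, e ⊆ C) :
    IP w Q ≤ IP w P := by
  have hsum : ∑ e ∈ crossingEdges P, w e = ∑ e ∈ crossingEdges Q, w e := by
    refine sum_subset (crossingEdges_subset_of_le hQP) fun e heQ heP => ?_
    simp only [crossingEdges, mem_filter, mem_univ, true_and, not_not] at heQ heP
    obtain ⟨B, hB, heB⟩ := heP
    by_contra hwe
    exact heQ (hcut e hwe B hB heB)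
  have hP' : (2 : ℝ) ≤ #P.parts := by exact_mod_cast hP
  have hPQ' : (#P.parts : ℝ) ≤ #Q.parts := by exact_mod_cast hPQ
  rw [IP_eq, IP_eq, hsum]
  gcongr
  · exact sum_nonneg fun e _ => hw e
  · linarith

end CrossingEdges

theorem cell_contains_edge_general {M : Type*} [Fintype M] [DecidableEq M]
    (w : Finset M → ℝ) (hw : ∀ e, 0 ≤ w e)
    (Pstar : Finpartition (Finset.univ : Finset M)) (hcard : 2 ≤ Pstar.parts.card)
    (hmin : ∀ Q : Finpartition (Finset.univ : Finset M),
      2 ≤ Q.parts.card → IP w Pstar ≤ IP w Q)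
    (hfinest : ∀ Q : Finpartition (Finset.univ : Finset M),
      2 ≤ Q.parts.card → IP w Q = IP w Pstar → Pstar ≤ Q)
    (A : Finset M) (hA : A ∈ Pstar.parts) (hA2 : 2 ≤ A.card) :
    ∃ e : Finset M, 0 < w e ∧ e ⊆ A := by
  by_contra! hno
  obtain ⟨a, ha⟩ := card_pos.mp (by omega : 0 < A.card)
  have hrest : A.erase a ≠ ∅ := by
    rw [← nonempty_iff_ne_empty, ← card_pos, card_erase_of_mem ha]
    omega
  let Q := Pstar.splitPart hA (singleton_ne_empty a) hrest
    (disjoint_singleton_left.2 (notMem_erase a A))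
    (by rw [sup_eq_union, ← insert_eq, insert_erase ha])
  have hQcard : #Q.parts = #Pstar.parts + 1 := Pstar.card_splitPart ..
  have hQ : IP w Q ≤ IP w Pstar := by
    refine IP_le_of_le w hw (Pstar.splitPart_le ..) hcard (by omega) fun e he B hB heB => ?_
    refine ⟨B, Pstar.mem_splitPart_parts_of_ne _ _ _ _ _ hB ?_, heB⟩
    rintro rfl
    exact hno e ((hw e).lt_of_ne' he) heB
  exact Pstar.not_le_splitPart _ _ _ _ _ (hfinest Q (by omega) (hQ.antisymm (hmin Q (by omega))))

/-- For a graphical source with fundamental partition `P*` (a minimizer of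
`I_P`, finest among minimizers), every cell `A ∈ P*` with `|A| ≥ 2` contains at least one
edge `e ∈ E` (i.e., some `e` with `w e > 0` and `e ⊆ A`). -/
theorem cell_contains_edge {M : Type*} [Fintype M] [DecidableEq M]
    (hm : 2 ≤ Fintype.card M)
    (w : Finset M → ℝ) (hw : ∀ e, 0 ≤ w e)
    (h2 : ∀ e, 0 < w e → e.card = 2)
    (Pstar : Finpartition (Finset.univ : Finset M)) (hcard : 2 ≤ Pstar.parts.card)
    (hmin : ∀ Q : Finpartition (Finset.univ : Finset M),
      2 ≤ Q.parts.card → IP w Pstar ≤ IP w Q)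
    (hfinest : ∀ Q : Finpartition (Finset.univ : Finset M),
      2 ≤ Q.parts.card → IP w Q = IP w Pstar → Pstar ≤ Q)
    (A : Finset M) (hA : A ∈ Pstar.parts) (hA2 : 2 ≤ A.card) :
    ∃ e : Finset M, 0 < w e ∧ e ⊆ A :=
  cell_contains_edge_general w hw Pstar hcard hmin hfinest A hA hA2
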